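/- For every integer k ≥ 0 and positive integer N, S_k(N) = (1/(2^k·(k+1)))·Σ_{n=1}^{k+1} C(k+1, n)·(1 − 2^{k−n})·B_{k+1−n}·((2N+1)^n − 1), where S_k(N) = Σ_{n=1}^N n^k and B_m denotes the m-th Bernoulli number (with B_1 = +1/2 convention as in Faulhaber's formula with negated B_1, matching the paper's usage). -/

import Mathlib

/-!
Write `B` for the Bernoulli polynomial `B_{k+1}`. Since `B(1 + x) = ∑ₙ C(k+1,n) B'_{k+1-n} xⁿ`,
the right-hand side is `((B(2N+2) - B(2)) - 2ᵏ (B(N+3/2) - B(3/2))) / (2ᵏ (k+1))`.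
By `B(x+1) - B(x) = (k+1) xᵏ`, the first difference is `(k+1)` times the sum of `mᵏ` over
`2 ≤ m ≤ 2N+1`, and `2ᵏ` times the second is `(k+1)` times the same sum over the odd `m` only;
what remains is the even part `(k+1) 2ᵏ S_k(N)`.
-/

open Finset

/-- The power sum `S_k(N) = ∑_{n=1}^N n^k`. -/
def powerSum (k N : ℕ) : ℚ := ∑ n ∈ Finset.Icc 1 N, (n : ℚ) ^ k

namespace Polynomial

theorem bernoulli_succ_eval_one_add (k : ℕ) (x : ℚ) :
    (bernoulli (k + 1)).eval (1 + x) =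
      ∑ n ∈ range (k + 2), ((k + 1).choose n : ℚ) * bernoulli' (k + 1 - n) * x ^ n := by
  have hterm : ∀ n ∈ range (k + 2),
      ((k + 1).choose n : ℚ) * bernoulli' (k + 1 - n) * x ^ n =
        (monomial n (_root_.bernoulli (k + 1 - n) * (k + 1).choose n)).eval x +
          if n = k then ((k : ℚ) + 1) * x ^ k else 0 := by
    intro n hn
    rw [eval_monomial]
    -- `bernoulli'` and `bernoulli` differ only at index 1, where `B'₁ - B₁ = 1`.
    split_ifs with hnk
    · subst hnk
      rw [Nat.add_sub_cancel_left, bernoulli'_one, _root_.bernoulli_one,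
        Nat.choose_succ_self_right]
      push_cast
      ring
    · rw [bernoulli_eq_bernoulli'_of_ne_one (by grind), add_zero]
      ring
  rw [sum_congr rfl hterm, sum_add_distrib, sum_ite_eq', if_pos (by simp),
    bernoulli_eval_one_add, bernoulli_def, eval_finsetSum]
  push_cast
  ring

theorem sum_choose_mul_bernoulli'_mul_pow_sub_pow (k : ℕ) (x y : ℚ) :
    ∑ n ∈ Icc 1 (k + 1), ((k + 1).choose n : ℚ) * bernoulli' (k + 1 - n) * (x ^ n - y ^ n) =
      (bernoulli (k + 1)).eval (1 + x) - (bernoulli (k + 1)).eval (1 + y) := by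
  rw [bernoulli_succ_eval_one_add, bernoulli_succ_eval_one_add, ← sum_sub_distrib]
  refine sum_subset (fun n hn => by simp at hn ⊢; omega) (fun n hn hn' => ?_) |>.trans
    (sum_congr rfl fun n _ => by ring)
  obtain rfl : n = 0 := by simp at hn hn'; omega
  simp

theorem bernoulli_succ_eval_add_natCast_sub (k M : ℕ) (x : ℚ) :
    (bernoulli (k + 1)).eval (x + M) - (bernoulli (k + 1)).eval x =
      ((k : ℚ) + 1) * ∑ i ∈ range M, (x + i) ^ k := by
  have htel := sum_range_sub (fun i => (bernoulli (k + 1)).eval (x + i)) M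
  rw [Nat.cast_zero, add_zero] at htel
  rw [← htel, mul_sum]
  refine sum_congr rfl fun i _ => ?_
  rw [Nat.cast_succ, ← add_assoc, add_comm _ (1 : ℚ), bernoulli_eval_one_add]
  push_cast
  ring

end Polynomial

theorem Finset.sum_range_two_mul {M : Type*} [AddCommMonoid M] (f : ℕ → M) (n : ℕ) :
    ∑ i ∈ range (2 * n), f i = ∑ i ∈ range n, (f (2 * i) + f (2 * i + 1)) := by
  induction n with
  | zero => simp
  | succ n ih => rw [Nat.mul_succ, sum_range_succ, sum_range_succ, sum_range_succ, ih, add_assoc]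

theorem powerSum_eq_sum_range (k N : ℕ) : powerSum k N = ∑ i ∈ range N, ((i : ℚ) + 1) ^ k := by
  rw [powerSum, ← Ico_add_one_right_eq_Icc, sum_Ico_eq_sum_range]
  simp [add_comm]

open Polynomial in
theorem two_pow_mul_succ_mul_powerSum (k N : ℕ) :
    2 ^ k * ((k : ℚ) + 1) * powerSum k N =
      ((Polynomial.bernoulli (k + 1)).eval ((2 : ℚ) + (2 * N : ℕ)) -
          (Polynomial.bernoulli (k + 1)).eval 2) -
        2 ^ k * ((Polynomial.bernoulli (k + 1)).eval ((3 / 2 : ℚ) + N) -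
          (Polynomial.bernoulli (k + 1)).eval (3 / 2)) := by
  rw [bernoulli_succ_eval_add_natCast_sub, bernoulli_succ_eval_add_natCast_sub,
    sum_range_two_mul, powerSum_eq_sum_range, mul_sum, mul_sum, mul_sum, mul_sum,
    ← sum_sub_distrib]
  refine sum_congr rfl fun i _ => ?_
  have heven : (2 + ((2 * i : ℕ) : ℚ)) ^ k = 2 ^ k * ((i : ℚ) + 1) ^ k := by
    rw [← mul_pow]; push_cast; ring_nf
  have hodd : (2 + ((2 * i + 1 : ℕ) : ℚ)) ^ k = 2 ^ k * (3 / 2 + (i : ℚ)) ^ k := by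
    rw [← mul_pow]; push_cast; ring_nf
  rw [heven, hodd]
  ring

theorem powerSum_bernoulli_expansion_general (k N : ℕ) :
    powerSum k N =
      (1 / (2 ^ k * ((k : ℚ) + 1))) *
        ∑ n ∈ Finset.Icc 1 (k + 1),
          ((k + 1).choose n : ℚ) * (1 - (2 : ℚ) ^ ((k : ℤ) - (n : ℤ))) *
            bernoulli' (k + 1 - n) * ((2 * (N : ℚ) + 1) ^ n - 1) := by
  set a : ℚ := 2 * N + 1
  have hsplit : ∀ n ∈ Icc 1 (k + 1),
      ((k + 1).choose n : ℚ) * (1 - (2 : ℚ) ^ ((k : ℤ) - (n : ℤ))) *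
          bernoulli' (k + 1 - n) * (a ^ n - 1) =
        ((k + 1).choose n : ℚ) * bernoulli' (k + 1 - n) * (a ^ n - 1 ^ n) -
          2 ^ k * (((k + 1).choose n : ℚ) * bernoulli' (k + 1 - n) *
            ((a / 2) ^ n - (1 / 2) ^ n)) := by
    intro n _
    rw [zpow_sub₀ two_ne_zero, zpow_natCast, zpow_natCast, div_pow, div_pow]
    field_simp
    ring
  rw [sum_congr rfl hsplit, sum_sub_distrib, ← mul_sum,
    Polynomial.sum_choose_mul_bernoulli'_mul_pow_sub_pow,
    Polynomial.sum_choose_mul_bernoulli'_mul_pow_sub_pow, one_div,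
    eq_inv_mul_iff_mul_eq₀ (by positivity), two_pow_mul_succ_mul_powerSum,
    show 1 + a = (2 : ℚ) + (2 * N : ℕ) by push_cast; ring, one_add_one_eq_two,
    show 1 + a / 2 = (3 / 2 : ℚ) + N by ring, show (1 : ℚ) + 1 / 2 = 3 / 2 by norm_num]

/-- Faulhaber-type formula (eq. (29) of the paper), with the `B₁ = +1/2`
Bernoulli convention (`bernoulli'` in Mathlib). -/
theorem powerSum_bernoulli_expansion (k N : ℕ) (hN : 1 ≤ N) :
    powerSum k N =
      (1 / (2 ^ k * ((k : ℚ) + 1))) *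
        ∑ n ∈ Finset.Icc 1 (k + 1),
          ((k + 1).choose n : ℚ) * (1 - (2 : ℚ) ^ ((k : ℤ) - (n : ℤ))) *
            bernoulli' (k + 1 - n) * ((2 * (N : ℚ) + 1) ^ n - 1) :=
  powerSum_bernoulli_expansion_general k N
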